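/- arXiv:1205.5300 — 2 statements merged into one kernel-verified Lean document; each statement's English description precedes it below -/
import Mathlib

section
/- Let M be a d×d symmetric positive definite real matrix, let z, v ∈ ℝ^d be nonzero vectors, and let θ₀ ∈ [0, π/2] be such that ⟨v, z−v⟩_M ≥ cos(θ₀)·‖v‖_M·‖z−v‖_M, where ⟨u,w⟩_M = uᵀMw and ‖u‖_M = √(uᵀMu). Then ‖z−v‖_M ≤ ‖z‖_M − ⟨z,v⟩_M/‖z‖_M + (sin θ₀)²·‖v‖_M²/‖z‖_M. -/
noncomputable def mprod {d : ℕ} (M : Matrix (Fin d) (Fin d) ℝ) (u v : Fin d → ℝ) : ℝ :=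
  dotProduct u (M.mulVec v)

noncomputable def mnorm {d : ℕ} (M : Matrix (Fin d) (Fin d) ℝ) (u : Fin d → ℝ) : ℝ :=
  Real.sqrt (mprod M u u)

lemma mprod_comm {d : ℕ} (M : Matrix (Fin d) (Fin d) ℝ) (hMs : M.IsSymm)
    (x y : Fin d → ℝ) : mprod M x y = mprod M y x := by
  unfold mprod
  rw [Matrix.dotProduct_mulVec, ← Matrix.mulVec_transpose, hMs.eq, dotProduct_comm]

lemma mprod_add_left {d : ℕ} (M : Matrix (Fin d) (Fin d) ℝ) (x y w : Fin d → ℝ) :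
    mprod M (x + y) w = mprod M x w + mprod M y w := by
  simp [mprod, add_dotProduct]

lemma mprod_add_right {d : ℕ} (M : Matrix (Fin d) (Fin d) ℝ) (x y w : Fin d → ℝ) :
    mprod M w (x + y) = mprod M w x + mprod M w y := by
  simp [mprod, Matrix.mulVec_add, dotProduct_add]

lemma mprod_self_nonneg {d : ℕ} (M : Matrix (Fin d) (Fin d) ℝ) (hM : M.PosDef)
    (x : Fin d → ℝ) : 0 ≤ mprod M x x := by
  have := hM.posSemidef.dotProduct_mulVec_nonneg x
  simpa [mprod] using this

lemma sq_mnorm {d : ℕ} (M : Matrix (Fin d) (Fin d) ℝ) (hM : M.PosDef)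
    (x : Fin d → ℝ) : mnorm M x ^ 2 = mprod M x x := by
  rw [mnorm, Real.sq_sqrt (mprod_self_nonneg M hM x)]

set_option maxHeartbeats 1000000 in
theorem stmt0 {d : ℕ} (M : Matrix (Fin d) (Fin d) ℝ) (hMs : M.IsSymm) (hM : M.PosDef)
    (z v : Fin d → ℝ) (hz : z ≠ 0) (hv : v ≠ 0) (θ₀ : ℝ) (hθ0 : 0 ≤ θ₀) (hθ1 : θ₀ ≤ Real.pi / 2)
    (h : mprod M v (z - v) ≥ Real.cos θ₀ * mnorm M v * mnorm M (z - v)) :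
    mnorm M (z - v) ≤ mnorm M z - mprod M z v / mnorm M z
      + (Real.sin θ₀) ^ 2 * (mnorm M v) ^ 2 / mnorm M z := by
  set a := mnorm M v with ha
  set b := mnorm M (z - v) with hb
  set n := mnorm M z with hn
  set c := mprod M v (z - v) with hc
  set k := Real.cos θ₀ with hk
  set s := Real.sin θ₀ with hs
  set w := z - v with hw
  have hzv : z = v + w := by rw [hw]; abel
  have hnn : 0 ≤ n := Real.sqrt_nonneg _
  have han : 0 ≤ a := Real.sqrt_nonneg _
  have hbn : 0 ≤ b := Real.sqrt_nonneg _
  have hkn : 0 ≤ k := Real.cos_nonneg_of_mem_Icc ⟨by linarith [Real.pi_pos], hθ1⟩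
  have hsn : 0 ≤ s := Real.sin_nonneg_of_nonneg_of_le_pi hθ0 (by linarith [Real.pi_pos, hθ1])
  have hks : s ^ 2 = 1 - k ^ 2 := by
    have := Real.sin_sq_add_cos_sq θ₀; rw [hk, hs]; linarith
  have hnpos : 0 < n := by
    rw [hn, mnorm]
    exact Real.sqrt_pos.2 (by simpa [mprod] using hM.dotProduct_mulVec_pos hz)
  have ha2 : a ^ 2 = mprod M v v := sq_mnorm M hM v
  have hb2 : b ^ 2 = mprod M (z - v) (z - v) := sq_mnorm M hM (z - v)
  have hn2 : n ^ 2 = a ^ 2 + 2 * c + b ^ 2 := by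
    rw [hn, sq_mnorm M hM z, ha2, hb2, hc, hzv,
      mprod_add_left, mprod_add_right, mprod_add_right, mprod_comm M hMs w v]
    ring
  have hzv2 : mprod M z v = a ^ 2 + c := by
    rw [ha2, hc, hzv, mprod_add_left, mprod_comm M hMs w v]
  have hcnn : 0 ≤ c := le_trans (by positivity) h
  have key : b * n ≤ b ^ 2 + c + s ^ 2 * a ^ 2 := by
    have hsq : (b * n) ^ 2 ≤ (b ^ 2 + c + s ^ 2 * a ^ 2) ^ 2 := by
      have h1 : 0 ≤ (c - k * a * b) * (c + k * a * b) :=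
        mul_nonneg (by linarith [h]) (by positivity)
      have h2 : 0 ≤ 2 * s ^ 2 * a ^ 2 * (c - k * a * b) := by
        have : 0 ≤ c - k * a * b := by linarith [h]
        positivity
      have h3 : 0 ≤ a ^ 2 * s ^ 2 * (b ^ 2 + 2 * k * a * b + s ^ 2 * a ^ 2) := by
        positivity
      have hbn2 : (b * n) ^ 2 = b ^ 2 * (a ^ 2 + 2 * c + b ^ 2) := by
        rw [mul_pow, hn2]
      have h4 : s ^ 2 * (a ^ 2 * b ^ 2) = (1 - k ^ 2) * (a ^ 2 * b ^ 2) := by rw [hks]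
      have h5 : s ^ 2 * s ^ 2 = (1 - k ^ 2) * s ^ 2 := by rw [hks]
      nlinarith [h1, h2, h3, h4, h5, hbn2]
    have hrhs : 0 ≤ b ^ 2 + c + s ^ 2 * a ^ 2 := by positivity
    have := Real.sqrt_le_sqrt hsq
    rwa [Real.sqrt_sq (mul_nonneg hbn hnn), Real.sqrt_sq hrhs] at this
  have heq : ∀ X Y : ℝ, n - X / n + Y / n = (n ^ 2 - X + Y) / n := by
    intro X Y
    rw [add_div, sub_div, sq, mul_div_assoc, div_self hnpos.ne', mul_one]
  rw [heq, le_div_iff₀ hnpos, hzv2, hn2]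
  nlinarith [key]
end

section
/- Let d ≥ 1, let M be a d×d symmetric positive definite real matrix with det M = 1, and let δ > 0. Let u ∈ ℝ^d with |u| = 1 (Euclidean norm). If R is a Haar-random orthogonal matrix in O(d), then P(‖Ru‖_M ≤ δ) ≤ (2^d/ω_d)·δ^{d−1}·ν₁(M), where ν₁(M) is the smallest singular value √(smallest eigenvalue of M), i.e. ν₁(M) = ‖M⁻¹‖^{−1/2}, and ω_d is the volume of the d-dimensional Euclidean unit ball. -/
/-- The volume of the `d`-dimensional Euclidean unit ball. -/
noncomputable def unitBallVol (d : ℕ) : ℝ :=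
  (MeasureTheory.volume (Metric.ball (0 : EuclideanSpace ℝ (Fin d)) 1)).toReal

/-- `isHaarOnO d μ` : `μ` is the Haar probability measure of the orthogonal group `O(d)`,
viewed as a measure on the space of `d×d` real matrices, characterized (uniquely) by being a
probability measure supported on `O(d)` and invariant under left translation by any element
of `O(d)`. -/

instance matrixMeasurableSpace {d : ℕ} : MeasurableSpace (Matrix (Fin d) (Fin d) ℝ) :=
  (inferInstance : MeasurableSpace (Fin d → Fin d → ℝ))

def isHaarOnO (d : ℕ) (μ : MeasureTheory.Measure (Matrix (Fin d) (Fin d) ℝ)) : Prop :=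
  MeasureTheory.IsProbabilityMeasure μ ∧
  μ { R | R ∉ Matrix.orthogonalGroup (Fin d) ℝ } = 0 ∧
  ∀ Q ∈ Matrix.orthogonalGroup (Fin d) ℝ, MeasureTheory.Measure.map (fun R => Q * R) μ = μ


noncomputable def opn {d : ℕ} (M : Matrix (Fin d) (Fin d) ℝ) : ℝ :=
  ‖LinearMap.toContinuousLinearMap (Matrix.toEuclideanLin M)‖

open MeasureTheory

namespace Stmt11Aux

variable {d : ℕ}

lemma meas_mul : Measurable fun p : Matrix (Fin d) (Fin d) ℝ × Matrix (Fin d) (Fin d) ℝ => p.1 * p.2 := by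
  apply measurable_pi_lambda; intro i; apply measurable_pi_lambda; intro j
  simp only [Matrix.mul_apply]
  exact Finset.measurable_sum _ fun k _ =>
    ((measurable_pi_apply k).comp ((measurable_pi_apply i).comp measurable_fst)).fun_mul
      ((measurable_pi_apply j).comp ((measurable_pi_apply k).comp measurable_snd))

lemma meas_mulL (Q : Matrix (Fin d) (Fin d) ℝ) : Measurable fun R : Matrix (Fin d) (Fin d) ℝ => Q * R :=
  meas_mul.comp (measurable_const.prodMk measurable_id)

lemma meas_mulR (Q : Matrix (Fin d) (Fin d) ℝ) : Measurable fun R : Matrix (Fin d) (Fin d) ℝ => R * Q :=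
  meas_mul.comp (measurable_id.prodMk measurable_const)

lemma meas_transpose : Measurable fun R : Matrix (Fin d) (Fin d) ℝ => R.transpose := by
  apply measurable_pi_lambda; intro i; apply measurable_pi_lambda; intro j
  exact (measurable_pi_apply i).comp (measurable_pi_apply j)

lemma meas_mulVec_pair : Measurable fun p : Matrix (Fin d) (Fin d) ℝ × (Fin d → ℝ) => p.1.mulVec p.2 := by
  apply measurable_pi_lambda; intro i
  simp only [Matrix.mulVec, dotProduct]
  exact Finset.measurable_sum _ fun k _ =>
    ((measurable_pi_apply k).comp ((measurable_pi_apply i).comp measurable_fst)).fun_mul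
      ((measurable_pi_apply k).comp measurable_snd)

lemma meas_mulVec (y : Fin d → ℝ) : Measurable fun R : Matrix (Fin d) (Fin d) ℝ => R.mulVec y :=
  meas_mulVec_pair.comp (measurable_id.prodMk measurable_const)

lemma star_eq_transpose (S : Matrix (Fin d) (Fin d) ℝ) : star S = S.transpose := by
  ext i j; simp [Matrix.star_apply]

lemma transpose_mem {S : Matrix (Fin d) (Fin d) ℝ} (hS : S ∈ Matrix.orthogonalGroup (Fin d) ℝ) :
    S.transpose ∈ Matrix.orthogonalGroup (Fin d) ℝ := by
  rw [← star_eq_transpose]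
  exact Unitary.star_mem hS

variable {μ : MeasureTheory.Measure (Matrix (Fin d) (Fin d) ℝ)}

lemma aeG (hμ : isHaarOnO d μ) : ∀ᵐ R ∂μ, R ∈ Matrix.orthogonalGroup (Fin d) ℝ :=
  (MeasureTheory.ae_iff).2 hμ.2.1

lemma lint_left_inv (hμ : isHaarOnO d μ) {Q : Matrix (Fin d) (Fin d) ℝ}
    (hQ : Q ∈ Matrix.orthogonalGroup (Fin d) ℝ) {g : Matrix (Fin d) (Fin d) ℝ → ENNReal}
    (hg : Measurable g) : ∫⁻ R, g (Q * R) ∂μ = ∫⁻ R, g R ∂μ := by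
  conv_rhs => rw [← hμ.2.2 Q hQ]
  rw [lintegral_map hg (meas_mulL Q)]

lemma transpose_invariant (hμ : isHaarOnO d μ) :
    Measure.map Matrix.transpose μ = μ := by
  haveI := hμ.1
  symm
  ext A hA
  rw [Measure.map_apply meas_transpose hA]
  set g : Matrix (Fin d) (Fin d) ℝ → ENNReal := A.indicator 1 with hgdef
  have hg : Measurable g := measurable_one.indicator hA
  have hgT : Measurable (g ∘ Matrix.transpose) := hg.comp meas_transpose
  have hunc : Measurable (Function.uncurry fun S T : Matrix (Fin d) (Fin d) ℝ => g (S.transpose * T)) := by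
    apply hg.comp
    exact meas_mul.comp ((meas_transpose.comp measurable_fst).prodMk measurable_snd)
  have h1 : ∫⁻ S, ∫⁻ T, g (S.transpose * T) ∂μ ∂μ = μ A := by
    have : ∀ᵐ S ∂μ, (∫⁻ T, g (S.transpose * T) ∂μ) = μ A := by
      filter_upwards [aeG hμ] with S hS
      rw [lint_left_inv hμ (transpose_mem hS) hg]
      rw [hgdef, lintegral_indicator hA]
      simp
    rw [lintegral_congr_ae this]
    simp [measure_univ]
  have h2 : ∫⁻ S, ∫⁻ T, g (S.transpose * T) ∂μ ∂μ
      = ∫⁻ T, ∫⁻ S, g (S.transpose * T) ∂μ ∂μ := lintegral_lintegral_swap hunc.aemeasurable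
  have h3 : ∫⁻ T, ∫⁻ S, g (S.transpose * T) ∂μ ∂μ = μ (Matrix.transpose ⁻¹' A) := by
    have : ∀ᵐ T ∂μ, (∫⁻ S, g (S.transpose * T) ∂μ) = μ (Matrix.transpose ⁻¹' A) := by
      filter_upwards [aeG hμ] with T hT
      have : ∀ S : Matrix (Fin d) (Fin d) ℝ, g (S.transpose * T) = (g ∘ Matrix.transpose) (T.transpose * S) := by
        intro S; simp [Function.comp, Matrix.transpose_mul]
      simp_rw [this]
      rw [lint_left_inv hμ (transpose_mem hT) hgT]
      have : (g ∘ Matrix.transpose) = (Matrix.transpose ⁻¹' A).indicator 1 := by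
        ext S
        simp [hgdef, Set.indicator, Function.comp, Set.mem_preimage]
        rfl
      rw [this, lintegral_indicator (meas_transpose hA)]
      simp
    rw [lintegral_congr_ae this]
    simp [measure_univ]
  rw [← h1, h2, h3]

lemma right_invariant (hμ : isHaarOnO d μ) {Q : Matrix (Fin d) (Fin d) ℝ}
    (hQ : Q ∈ Matrix.orthogonalGroup (Fin d) ℝ) :
    Measure.map (fun R => R * Q) μ = μ := by
  conv_lhs => rw [← transpose_invariant hμ]
  rw [Measure.map_map (meas_mulR Q) meas_transpose]
  have : ((fun R => R * Q) ∘ Matrix.transpose) = Matrix.transpose ∘ (fun R => Q.transpose * R) := by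
    ext R : 1
    simp [Function.comp, Matrix.transpose_mul]
  rw [this, ← Measure.map_map meas_transpose (meas_mulL Q.transpose),
    hμ.2.2 Q.transpose (transpose_mem hQ), transpose_invariant hμ]

end Stmt11Aux
namespace Stmt11Aux
variable {d : ℕ} {M : Matrix (Fin d) (Fin d) ℝ}

noncomputable def n2 (y : Fin d → ℝ) : ℝ := Real.sqrt (∑ i, y i ^ 2)

noncomputable def toE (y : Fin d → ℝ) : EuclideanSpace ℝ (Fin d) :=
  (WithLp.equiv 2 (Fin d → ℝ)).symm y

lemma toE_coe (y : Fin d → ℝ) : ∀ i, toE y i = y i := fun _ => rfl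

lemma norm_sq_E (x : EuclideanSpace ℝ (Fin d)) : ‖x‖ ^ 2 = ∑ i, x i ^ 2 := by
  rw [EuclideanSpace.norm_eq, Real.sq_sqrt]
  · apply Finset.sum_congr rfl; intro i _; rw [Real.norm_eq_abs, sq_abs]
  · exact Finset.sum_nonneg fun i _ => sq_nonneg _

lemma coord_sq_le (x : EuclideanSpace ℝ (Fin d)) (i : Fin d) : x i ^ 2 ≤ ‖x‖ ^ 2 := by
  rw [norm_sq_E]
  exact Finset.single_le_sum (fun j _ => sq_nonneg (x j)) (Finset.mem_univ i)

lemma inner_toE (x : EuclideanSpace ℝ (Fin d)) (y : Fin d → ℝ) :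
    (inner ℝ x (toE y) : ℝ) = ∑ k, x k * y k := by
  rw [PiLp.inner_apply]
  apply Finset.sum_congr rfl
  intro k _
  simp [RCLike.inner_apply, starRingEnd_apply, toE_coe, mul_comm]

section Spectral

variable {M : Matrix (Fin d) (Fin d) ℝ}

lemma symm_of_posdef (hM : M.PosDef) : M.transpose = M := by
  ext i j
  have := congrFun (congrFun hM.1 i) j
  simpa using this

/-- coordinates of `A *ᵥ y` in the eigenbasis, for `A` symmetric with the same eigenvectors -/
lemma repr_mulVec (hM : M.PosDef) {A : Matrix (Fin d) (Fin d) ℝ} (hAs : A.transpose = A) {a : Fin d → ℝ}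
    (heig : ∀ j, A.mulVec (fun l => hM.1.eigenvectorBasis j l) = fun k => a j * hM.1.eigenvectorBasis j k)
    (y : Fin d → ℝ) (i : Fin d) :
    (hM.1.eigenvectorBasis.repr (toE (A.mulVec y))) i
      = a i * (hM.1.eigenvectorBasis.repr (toE y)) i := by
  set b := hM.1.eigenvectorBasis with hb
  rw [OrthonormalBasis.repr_apply_apply, OrthonormalBasis.repr_apply_apply,
    inner_toE, inner_toE]
  calc ∑ k, (b i) k * (A.mulVec y) k
      = dotProduct (fun l => b i l) (A.mulVec y) := rfl
    _ = dotProduct (Matrix.vecMul (fun l => b i l) A) y := Matrix.dotProduct_mulVec _ _ _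
    _ = dotProduct (A.transpose.mulVec (fun l => b i l)) y := by
        rw [Matrix.mulVec_transpose]
    _ = dotProduct (A.mulVec (fun l => b i l)) y := by rw [hAs]
    _ = dotProduct (fun k => a i * b i k) y := by rw [heig i]
    _ = a i * ∑ k, (b i) k * y k := by
        rw [dotProduct, Finset.mul_sum]
        apply Finset.sum_congr rfl
        intro k _
        ring

lemma eig_plain (hM : M.PosDef) :
    ∀ j, M.mulVec (fun l => hM.1.eigenvectorBasis j l) = fun k => hM.1.eigenvalues j * hM.1.eigenvectorBasis j k :=
  fun j => hM.1.mulVec_eigenvectorBasis j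

lemma eig_inv_plain (hM : M.PosDef) :
    ∀ j, M⁻¹.mulVec (fun l => hM.1.eigenvectorBasis j l)
      = fun k => (hM.1.eigenvalues j)⁻¹ * hM.1.eigenvectorBasis j k := by
  intro j
  have hdet : M.det ≠ 0 := hM.det_pos.ne'
  have hlam : hM.1.eigenvalues j ≠ 0 := (hM.eigenvalues_pos j).ne'
  have h1 : M⁻¹.mulVec (M.mulVec (fun l => hM.1.eigenvectorBasis j l)) = fun l => hM.1.eigenvectorBasis j l := by
    rw [Matrix.mulVec_mulVec, Matrix.nonsing_inv_mul M (isUnit_iff_ne_zero.2 hdet), Matrix.one_mulVec]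
  rw [eig_plain hM j] at h1
  funext k
  have h2 := congrFun h1 k
  have h3 : (fun k => hM.1.eigenvalues j * hM.1.eigenvectorBasis j k)
      = hM.1.eigenvalues j • (fun l => hM.1.eigenvectorBasis j l) := rfl
  rw [h3, Matrix.mulVec_smul] at h1
  have h4 := congrFun h1 k
  simp only [Pi.smul_apply, smul_eq_mul] at h4
  rw [← h4, inv_mul_cancel_left₀ hlam]

lemma mprod_eq (hM : M.PosDef) (y : Fin d → ℝ) :
    mprod M y y = ∑ i, hM.1.eigenvalues i * (hM.1.eigenvectorBasis.repr (toE y) i) ^ 2 := by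
  set b := hM.1.eigenvectorBasis
  have h0 : mprod M y y = (inner ℝ (toE y) (toE (M.mulVec y)) : ℝ) := by
    rw [inner_toE]; rfl
  rw [h0, ← b.repr.inner_map_map (toE y) (toE (M.mulVec y)), PiLp.inner_apply]
  apply Finset.sum_congr rfl
  intro i _
  rw [repr_mulVec hM (symm_of_posdef hM) (eig_plain hM)]
  simp only [RCLike.inner_apply, starRingEnd_apply, star_trivial]
  ring



lemma repr_toE_normsq (b : OrthonormalBasis (Fin d) ℝ (EuclideanSpace ℝ (Fin d)))
    (x : EuclideanSpace ℝ (Fin d)) : ∑ i, (b.repr x i) ^ 2 = ‖x‖ ^ 2 := by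
  rw [← norm_sq_E (b.repr x), b.repr.norm_map]

lemma toEuclideanLin_eq_toE (A : Matrix (Fin d) (Fin d) ℝ) (x : EuclideanSpace ℝ (Fin d)) :
    Matrix.toEuclideanLin A x = toE (A.mulVec (fun k => x k)) := rfl

lemma opn_inv_le (hM : M.PosDef) {i₀ : Fin d} (hmin : ∀ i, hM.1.eigenvalues i₀ ≤ hM.1.eigenvalues i) :
    opn M⁻¹ ≤ (hM.1.eigenvalues i₀)⁻¹ := by
  set lam := hM.1.eigenvalues
  have hpos : ∀ i, 0 < lam i := fun i => hM.eigenvalues_pos i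
  apply ContinuousLinearMap.opNorm_le_bound _ (inv_nonneg.2 (hpos i₀).le)
  intro x
  rw [LinearMap.coe_toContinuousLinearMap']
  rw [toEuclideanLin_eq_toE]
  set b := hM.1.eigenvectorBasis
  have hsq : ‖toE (M⁻¹.mulVec (fun k => x k))‖ ^ 2 ≤ ((lam i₀)⁻¹ * ‖x‖) ^ 2 := by
    rw [← repr_toE_normsq b]
    have hx : toE (fun k => x k) = x := rfl
    calc ∑ i, (b.repr (toE (M⁻¹.mulVec (fun k => x k))) i) ^ 2
        = ∑ i, ((lam i)⁻¹ * b.repr x i) ^ 2 := by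
          apply Finset.sum_congr rfl
          intro i _
          rw [repr_mulVec hM (by rw [Matrix.transpose_nonsing_inv, symm_of_posdef hM]) (eig_inv_plain hM), hx]
      _ ≤ ∑ i, ((lam i₀)⁻¹ * b.repr x i) ^ 2 := by
          apply Finset.sum_le_sum
          intro i _
          rw [mul_pow, mul_pow]
          apply mul_le_mul_of_nonneg_right _ (sq_nonneg _)
          rw [pow_two, pow_two]
          have h1 : (lam i)⁻¹ ≤ (lam i₀)⁻¹ := by
            apply inv_anti₀ (hpos i₀) (hmin i)
          exact mul_le_mul h1 h1 (inv_nonneg.2 (hpos i).le) (inv_nonneg.2 (hpos i₀).le)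
      _ = ((lam i₀)⁻¹ * ‖x‖) ^ 2 := by
          simp_rw [mul_pow]
          rw [← Finset.mul_sum, repr_toE_normsq b]
  have h2 : (0:ℝ) ≤ (lam i₀)⁻¹ * ‖x‖ := mul_nonneg (inv_nonneg.2 (hpos i₀).le) (norm_nonneg _)
  nlinarith [norm_nonneg (toE (M⁻¹.mulVec (fun k => x k)))]

lemma opn_inv_pos (hM : M.PosDef) {i₀ : Fin d} : (hM.1.eigenvalues i₀)⁻¹ ≤ opn M⁻¹ := by
  set lam := hM.1.eigenvalues
  set b := hM.1.eigenvectorBasis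
  have hpos : 0 < lam i₀ := hM.eigenvalues_pos i₀
  have hb1 : ‖b i₀‖ = 1 := b.orthonormal.1 i₀
  have := ContinuousLinearMap.le_opNorm (LinearMap.toContinuousLinearMap (Matrix.toEuclideanLin M⁻¹)) (b i₀)
  rw [hb1, mul_one] at this
  have happ : (LinearMap.toContinuousLinearMap (Matrix.toEuclideanLin M⁻¹)) (b i₀)
      = toE (M⁻¹.mulVec (fun k => b i₀ k)) := rfl
  rw [happ, eig_inv_plain hM i₀] at this
  have hnorm : ‖toE (fun k => (lam i₀)⁻¹ * b i₀ k)‖ = (lam i₀)⁻¹ := by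
    have : (fun k => (lam i₀)⁻¹ * b i₀ k) = ((lam i₀)⁻¹ • (fun k => b i₀ k) : Fin d → ℝ) := rfl
    rw [this]
    have h3 : toE ((lam i₀)⁻¹ • (fun k => b i₀ k) : Fin d → ℝ) = (lam i₀)⁻¹ • b i₀ := rfl
    rw [h3, norm_smul, hb1]
    rw [mul_one, Real.norm_eq_abs, abs_of_nonneg (inv_nonneg.2 hpos.le)]
  rw [hnorm] at this
  exact this

lemma prod_eigenvalues_one (hM : M.PosDef) (hdet : M.det = 1) :
    ∏ i, hM.1.eigenvalues i = 1 := by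
  have := hM.1.det_eq_prod_eigenvalues
  rw [hdet] at this
  exact_mod_cast this.symm

lemma prod_sqrt_eigenvalues_one (hM : M.PosDef) (hdet : M.det = 1) :
    ∏ i, Real.sqrt (hM.1.eigenvalues i) = 1 := by
  have h1 : (∏ i, Real.sqrt (hM.1.eigenvalues i)) ^ 2 = 1 := by
    rw [← Finset.prod_pow]
    rw [Finset.prod_congr rfl fun i _ => Real.sq_sqrt (hM.eigenvalues_pos i).le]
    exact prod_eigenvalues_one hM hdet
  have h2 : 0 ≤ ∏ i, Real.sqrt (hM.1.eigenvalues i) :=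
    Finset.prod_nonneg fun i _ => Real.sqrt_nonneg _
  nlinarith

lemma prod_min_bound (hM : M.PosDef) (hdet : M.det = 1) (hd : 1 ≤ d) {δ : ℝ} (hδ : 0 < δ)
    {i₀ : Fin d} :
    ∏ i, min 1 (δ / Real.sqrt (hM.1.eigenvalues i))
      ≤ δ ^ (d - 1) * Real.sqrt (hM.1.eigenvalues i₀) := by
  set ν := fun i => Real.sqrt (hM.1.eigenvalues i) with hν
  have hνpos : ∀ i, 0 < ν i := fun i => Real.sqrt_pos.2 (hM.eigenvalues_pos i)
  rw [← Finset.mul_prod_erase Finset.univ _ (Finset.mem_univ i₀)]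
  have h1 : min 1 (δ / ν i₀) ≤ 1 := min_le_left _ _
  have h2 : ∏ i ∈ Finset.univ.erase i₀, min 1 (δ / ν i) ≤ ∏ i ∈ Finset.univ.erase i₀, δ / ν i := by
    apply Finset.prod_le_prod
    · intro i _; exact le_min zero_le_one (div_nonneg hδ.le (hνpos i).le)
    · intro i _; exact min_le_right _ _
  have h3 : ∏ i ∈ Finset.univ.erase i₀, δ / ν i = δ ^ (d - 1) * ν i₀ := by
    rw [Finset.prod_div_distrib, Finset.prod_const]
    have hcard : (Finset.univ.erase i₀).card = d - 1 := by
      rw [Finset.card_erase_of_mem (Finset.mem_univ i₀), Finset.card_univ, Fintype.card_fin]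
    rw [hcard]
    have hprod : ν i₀ * ∏ i ∈ Finset.univ.erase i₀, ν i = 1 := by
      rw [Finset.mul_prod_erase Finset.univ _ (Finset.mem_univ i₀)]
      exact prod_sqrt_eigenvalues_one hM hdet
    have herase : ∏ i ∈ Finset.univ.erase i₀, ν i = (ν i₀)⁻¹ := by
      have := hνpos i₀
      field_simp
      nlinarith [hprod]
    rw [herase]
    field_simp
  calc min 1 (δ / ν i₀) * ∏ i ∈ Finset.univ.erase i₀, min 1 (δ / ν i)
      ≤ 1 * ∏ i ∈ Finset.univ.erase i₀, δ / ν i := by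
        apply mul_le_mul h1 h2 (Finset.prod_nonneg fun i _ => le_min zero_le_one (div_nonneg hδ.le (hνpos i).le)) zero_le_one
    _ = δ ^ (d - 1) * ν i₀ := by rw [one_mul, h3]


lemma norm_toE (y : Fin d → ℝ) : ‖toE y‖ = n2 y := by
  rw [EuclideanSpace.norm_eq, n2]
  congr 1
  apply Finset.sum_congr rfl
  intro i _
  rw [toE_coe, Real.norm_eq_abs, sq_abs]

lemma cont_n2 : Continuous (n2 : (Fin d → ℝ) → ℝ) :=
  Real.continuous_sqrt.comp (continuous_finset_sum _ fun i _ => (continuous_apply i).pow 2)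

lemma cont_mnorm (M : Matrix (Fin d) (Fin d) ℝ) : Continuous fun y : Fin d → ℝ => mnorm M y := by
  apply Real.continuous_sqrt.comp
  show Continuous fun y : Fin d → ℝ => mprod M y y
  have : ∀ y : Fin d → ℝ, mprod M y y = ∑ i, y i * ∑ j, M i j * y j := by
    intro y; rfl
  simp_rw [this]
  exact continuous_finset_sum _ fun i _ => (continuous_apply i).mul
    (continuous_finset_sum _ fun j _ => continuous_const.mul (continuous_apply j))

lemma measC' (M : Matrix (Fin d) (Fin d) ℝ) (δ : ℝ) :
    MeasurableSet {y : Fin d → ℝ | n2 y ≤ 1 ∧ mnorm M y ≤ δ} := by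
  apply MeasurableSet.inter
  · exact measurableSet_le cont_n2.measurable measurable_const
  · exact measurableSet_le (cont_mnorm M).measurable measurable_const

lemma volC'_le (hM : M.PosDef) (hdet : M.det = 1) (hd : 1 ≤ d) {δ : ℝ} (hδ : 0 < δ)
    {i₀ : Fin d} (hmin : ∀ i, hM.1.eigenvalues i₀ ≤ hM.1.eigenvalues i) :
    volume {y : Fin d → ℝ | n2 y ≤ 1 ∧ mnorm M y ≤ δ}
      ≤ ENNReal.ofReal (2 ^ d * (δ ^ (d - 1) * Real.sqrt (hM.1.eigenvalues i₀))) := by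
  classical
  set lam := hM.1.eigenvalues with hlam
  set b := hM.1.eigenvectorBasis with hb
  set ν := fun i => Real.sqrt (lam i) with hν
  have hνpos : ∀ i, 0 < ν i := fun i => Real.sqrt_pos.2 (hM.eigenvalues_pos i)
  set c := fun i => min 1 (δ / ν i) with hc
  have hcpos : ∀ i, 0 ≤ c i := fun i => le_min zero_le_one (div_nonneg hδ.le (hνpos i).le)
  set Box : Set (Fin d → ℝ) := Set.univ.pi fun i => Set.Icc (-(c i)) (c i) with hBox
  have hBoxMeas : MeasurableSet Box := MeasurableSet.univ_pi fun i => measurableSet_Icc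
  set C' : Set (Fin d → ℝ) := {y | n2 y ≤ 1 ∧ mnorm M y ≤ δ} with hC'
  have hC'Meas : MeasurableSet C' := measC' M δ
  set e := (MeasurableEquiv.toLp 2 (Fin d → ℝ)).symm with he
  have hmpE : MeasurePreserving e volume volume := EuclideanSpace.volume_preserving_symm_measurableEquiv_toLp (Fin d)
  set F : EuclideanSpace ℝ (Fin d) → (Fin d → ℝ) := fun x => e (b.repr x) with hF
  have hmpF : MeasurePreserving F volume volume := hmpE.comp b.measurePreserving_repr
  have hincl : e ⁻¹' C' ⊆ F ⁻¹' Box := by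
    intro x hx
    obtain ⟨h1, h2⟩ := hx
    have hxE : toE (e x) = x := rfl
    have hnx : ‖x‖ ≤ 1 := by
      rw [← hxE, norm_toE]; exact h1
    have hmp : mprod M (e x) (e x) = ∑ i, lam i * (b.repr x i) ^ 2 := by
      rw [mprod_eq hM, hxE]
    have hmpnn : 0 ≤ mprod M (e x) (e x) := by
      rw [hmp]
      exact Finset.sum_nonneg fun i _ => mul_nonneg (hM.eigenvalues_pos i).le (sq_nonneg _)
    have hmple : mprod M (e x) (e x) ≤ δ ^ 2 := by
      have hs := h2
      rw [mnorm] at hs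
      nlinarith [Real.sq_sqrt hmpnn, Real.sqrt_nonneg (mprod M (e x) (e x))]
    intro i _
    simp only [Set.mem_Icc, ← abs_le]
    have hterm : lam i * (b.repr x i) ^ 2 ≤ δ ^ 2 := by
      calc lam i * (b.repr x i) ^ 2
          ≤ ∑ j, lam j * (b.repr x j) ^ 2 :=
            Finset.single_le_sum (fun j _ => mul_nonneg (hM.eigenvalues_pos j).le (sq_nonneg _)) (Finset.mem_univ i)
        _ ≤ δ ^ 2 := by rw [← hmp]; exact hmple
    have habs1 : |b.repr x i| ≤ 1 := by
      have := coord_sq_le (b.repr x) i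
      rw [b.repr.norm_map] at this
      nlinarith [abs_nonneg (b.repr x i), sq_abs (b.repr x i), norm_nonneg x]
    have habs2 : |b.repr x i| ≤ δ / ν i := by
      rw [le_div_iff₀ (hνpos i)]
      nlinarith [abs_nonneg (b.repr x i), sq_abs (b.repr x i), Real.sq_sqrt (hM.eigenvalues_pos i).le,
        (hνpos i).le, hδ.le]
    exact le_min habs1 habs2
  calc volume C' = volume (e ⁻¹' C') := (hmpE.measure_preimage hC'Meas.nullMeasurableSet).symm
    _ ≤ volume (F ⁻¹' Box) := measure_mono hincl
    _ = volume Box := hmpF.measure_preimage hBoxMeas.nullMeasurableSet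
    _ = ENNReal.ofReal (∏ i, (2 * c i)) := by
        rw [hBox, volume_pi_pi]
        have hic : ∀ i : Fin d, volume (Set.Icc (-(c i)) (c i)) = ENNReal.ofReal (2 * c i) := by
          intro i; rw [Real.volume_Icc]; congr 1; ring
        rw [Finset.prod_congr rfl fun i _ => hic i,
          ← ENNReal.ofReal_prod_of_nonneg (fun i _ => by positivity)]
    _ ≤ ENNReal.ofReal (2 ^ d * (δ ^ (d - 1) * Real.sqrt (lam i₀))) := by
        apply ENNReal.ofReal_le_ofReal
        rw [Finset.prod_mul_distrib, Finset.prod_const, Finset.card_univ, Fintype.card_fin]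
        exact mul_le_mul_of_nonneg_left (prod_min_bound hM hdet hd hδ) (by positivity)

end Spectral

lemma exists_onb (hd : 1 ≤ d) {u : Fin d → ℝ} (hu : n2 u = 1) :
    ∃ B : OrthonormalBasis (Fin d) ℝ (EuclideanSpace ℝ (Fin d)), B ⟨0, hd⟩ = toE u := by
  have hcard : Module.finrank ℝ (EuclideanSpace ℝ (Fin d)) = Fintype.card (Fin d) := by
    simp [finrank_euclideanSpace]
  have hnorm : ‖toE u‖ = 1 := by rw [norm_toE, hu]
  have horth : Orthonormal ℝ (({⟨0, hd⟩} : Set (Fin d)).restrict fun _ => toE u) := by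
    constructor
    · intro i; exact hnorm
    · intro i j hij
      exact absurd (Subtype.ext (by
        have h1 := i.2; have h2 := j.2
        simp only [Set.mem_singleton_iff] at h1 h2
        rw [h1, h2])) hij
  obtain ⟨B, hB⟩ := Orthonormal.exists_orthonormalBasis_extension_of_card_eq hcard horth
  exact ⟨B, hB ⟨0, hd⟩ rfl⟩

lemma exists_orthogonal_mulVec (hd : 1 ≤ d) {u w : Fin d → ℝ} (hu : n2 u = 1) (hw : n2 w = 1) :
    ∃ Q ∈ Matrix.orthogonalGroup (Fin d) ℝ, Q.mulVec u = w := by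
  obtain ⟨B, hB⟩ := exists_onb hd hu
  obtain ⟨C, hC⟩ := exists_onb hd hw
  set f : EuclideanSpace ℝ (Fin d) ≃ₗᵢ[ℝ] EuclideanSpace ℝ (Fin d) := B.repr.trans C.repr.symm with hf
  set L : (Fin d → ℝ) →ₗ[ℝ] (Fin d → ℝ) :=
    (WithLp.linearEquiv 2 ℝ (Fin d → ℝ)).toLinearMap ∘ₗ f.toLinearEquiv.toLinearMap ∘ₗ
      (WithLp.linearEquiv 2 ℝ (Fin d → ℝ)).symm.toLinearMap with hL
  have hLapply : ∀ y : Fin d → ℝ, ∀ i, L y i = f (toE y) i := by intro y i; rfl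
  set Q := LinearMap.toMatrix' L with hQ
  have hmul : ∀ y : Fin d → ℝ, Q.mulVec y = L y := by
    intro y
    rw [hQ, ← Matrix.toLin'_apply, Matrix.toLin'_toMatrix']
  refine ⟨Q, ?_, ?_⟩
  · rw [Matrix.mem_orthogonalGroup_iff']
    ext j k
    rw [Matrix.mul_apply]
    have hentry : ∀ i j, Q i j = f (toE (Pi.single j 1)) i := by
      intro i j
      rw [hQ, LinearMap.toMatrix'_apply]
      have h2 : (fun j' => if j' = j then (1:ℝ) else 0) = Pi.single j 1 := by
        funext j'; simp [Pi.single_apply]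
      exact hLapply (Pi.single j 1) i
    have : ∑ i, Q.transpose j i * Q i k = ∑ i, (f (toE (Pi.single j 1)) i) * (f (toE (Pi.single k 1)) i) := by
      apply Finset.sum_congr rfl
      intro i _
      rw [Matrix.transpose_apply, hentry, hentry]
    rw [this]
    have hinner : ∑ i, (f (toE (Pi.single j 1)) i) * (f (toE (Pi.single k 1)) i)
        = inner ℝ (f (toE (Pi.single j 1))) (f (toE (Pi.single k 1))) := by
      rw [PiLp.inner_apply]
      simp [RCLike.inner_apply, mul_comm]
    rw [hinner, f.inner_map_map, PiLp.inner_apply]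
    simp only [RCLike.inner_apply, starRingEnd_apply, star_trivial]
    by_cases hjk : j = k
    · subst hjk
      simp [toE_coe, Pi.single_apply, Matrix.one_apply]
    · rw [Matrix.one_apply_ne hjk]
      rw [Finset.sum_eq_zero]
      intro i _
      rw [toE_coe, toE_coe]
      simp only [Pi.single_apply]
      by_cases hij : i = j
      · subst hij; simp [Ne.symm, hjk]
      · simp [hij]
  · rw [hmul]
    funext i
    rw [hLapply]
    have hfu : f (toE u) = toE w := by
      rw [hf]
      simp only [LinearIsometryEquiv.trans_apply]
      rw [← hB, B.repr_self, ← hC]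
      exact C.repr_symm_single ⟨0, hd⟩
    rw [hfu]; rfl


lemma n2_nonneg (y : Fin d → ℝ) : 0 ≤ n2 y := Real.sqrt_nonneg _

lemma n2_eq_zero_iff (y : Fin d → ℝ) : n2 y = 0 ↔ y = 0 := by
  rw [n2, Real.sqrt_eq_zero (Finset.sum_nonneg fun i _ => sq_nonneg _)]
  constructor
  · intro h
    funext i
    have := (Finset.sum_eq_zero_iff_of_nonneg (fun j _ => sq_nonneg (y j))).1 h i (Finset.mem_univ i)
    exact pow_eq_zero_iff (n := 2) (by norm_num) |>.1 this
  · intro h; rw [h]; simp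

lemma n2_pos {y : Fin d → ℝ} (hy : y ≠ 0) : 0 < n2 y :=
  lt_of_le_of_ne (n2_nonneg y) fun h => hy ((n2_eq_zero_iff y).1 h.symm)

lemma n2_smul (c : ℝ) (y : Fin d → ℝ) : n2 (c • y) = |c| * n2 y := by
  rw [n2, n2]
  have h : ∑ i, (c • y) i ^ 2 = c ^ 2 * ∑ i, y i ^ 2 := by
    rw [Finset.mul_sum]
    apply Finset.sum_congr rfl
    intro i _
    simp [Pi.smul_apply, smul_eq_mul]
    ring
  rw [h, Real.sqrt_mul (sq_nonneg c), Real.sqrt_sq_eq_abs]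

lemma mprod_smul (c : ℝ) (y : Fin d → ℝ) : mprod M (c • y) (c • y) = c ^ 2 * mprod M y y := by
  unfold mprod
  rw [Matrix.mulVec_smul, smul_dotProduct, dotProduct_smul]
  simp [smul_eq_mul]
  ring

lemma mnorm_smul (c : ℝ) (y : Fin d → ℝ) : mnorm M (c • y) = |c| * mnorm M y := by
  unfold mnorm
  rw [mprod_smul, Real.sqrt_mul (sq_nonneg c), Real.sqrt_sq_eq_abs]

lemma orth_transpose_mul {R : Matrix (Fin d) (Fin d) ℝ} (hR : R ∈ Matrix.orthogonalGroup (Fin d) ℝ) :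
    R.transpose * R = 1 := by
  have := (Matrix.mem_orthogonalGroup_iff' (Fin d) ℝ).1 hR
  exact this

lemma n2_mulVec_orth {R : Matrix (Fin d) (Fin d) ℝ} (hR : R ∈ Matrix.orthogonalGroup (Fin d) ℝ)
    (y : Fin d → ℝ) : n2 (R.mulVec y) = n2 y := by
  unfold n2
  congr 1
  have h1 : ∀ z : Fin d → ℝ, ∑ i, z i ^ 2 = dotProduct z z := by
    intro z
    apply Finset.sum_congr rfl
    intro i _
    rw [pow_two]
  rw [h1, h1, Matrix.dotProduct_mulVec, ← Matrix.mulVec_transpose, Matrix.mulVec_mulVec,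
    orth_transpose_mul hR, Matrix.one_mulVec]

lemma meas_mnorm_mulVec (M : Matrix (Fin d) (Fin d) ℝ) (u : Fin d → ℝ) :
    Measurable fun R : Matrix (Fin d) (Fin d) ℝ => mnorm M (R.mulVec u) :=
  (cont_mnorm M).measurable.comp (meas_mulVec u)

lemma m_const {μ : Measure (Matrix (Fin d) (Fin d) ℝ)} (hμ : isHaarOnO d μ) (hd : 1 ≤ d)
    {u w : Fin d → ℝ} (hu : n2 u = 1) (hw : n2 w = 1) (M : Matrix (Fin d) (Fin d) ℝ) (δ : ℝ) :
    μ {R | mnorm M (R.mulVec w) ≤ δ} = μ {R | mnorm M (R.mulVec u) ≤ δ} := by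
  obtain ⟨Q, hQ, hQu⟩ := exists_orthogonal_mulVec hd hu hw
  have hmeas : MeasurableSet {R : Matrix (Fin d) (Fin d) ℝ | mnorm M (R.mulVec u) ≤ δ} :=
    measurableSet_le (meas_mnorm_mulVec M u) measurable_const
  have hset : {R : Matrix (Fin d) (Fin d) ℝ | mnorm M (R.mulVec w) ≤ δ}
      = (fun R => R * Q) ⁻¹' {R | mnorm M (R.mulVec u) ≤ δ} := by
    ext R
    simp only [Set.mem_setOf_eq, Set.mem_preimage]
    rw [← Matrix.mulVec_mulVec, hQu]
  rw [hset, ← Measure.map_apply (meas_mulR Q) hmeas, right_invariant hμ hQ]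

section Main

variable {μ : Measure (Matrix (Fin d) (Fin d) ℝ)}

lemma meas_mulVec_right (R : Matrix (Fin d) (Fin d) ℝ) :
    Measurable fun y : Fin d → ℝ => R.mulVec y :=
  meas_mulVec_pair.comp (measurable_const.prodMk measurable_id)

lemma meas_mulVec_toLin' (R : Matrix (Fin d) (Fin d) ℝ) :
    Measurable ⇑(Matrix.toLin' R) := by
  have h : ⇑(Matrix.toLin' R) = fun y => R.mulVec y := funext fun y => Matrix.toLin'_apply R y
  rw [h]
  exact meas_mulVec_right R

lemma measC (M : Matrix (Fin d) (Fin d) ℝ) (δ : ℝ) :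
    MeasurableSet {y : Fin d → ℝ | y ≠ 0 ∧ n2 y ≤ 1 ∧ mnorm M y ≤ δ * n2 y} := by
  apply MeasurableSet.inter
  · exact (measurableSet_singleton (0 : Fin d → ℝ)).compl
  apply MeasurableSet.inter
  · exact measurableSet_le cont_n2.measurable measurable_const
  · exact measurableSet_le (cont_mnorm M).measurable (measurable_const.mul cont_n2.measurable)

lemma measD : MeasurableSet {y : Fin d → ℝ | y ≠ 0 ∧ n2 y ≤ 1} :=
  (measurableSet_singleton (0 : Fin d → ℝ)).compl.inter
    (measurableSet_le cont_n2.measurable measurable_const)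

lemma key_identity (hd : 1 ≤ d) (hM : M.PosDef) {δ : ℝ} (hδ : 0 < δ)
    {u : Fin d → ℝ} (hu : n2 u = 1) (hμ : isHaarOnO d μ) :
    μ {R | mnorm M (R.mulVec u) ≤ δ} * volume {y : Fin d → ℝ | y ≠ 0 ∧ n2 y ≤ 1}
      = volume {y : Fin d → ℝ | y ≠ 0 ∧ n2 y ≤ 1 ∧ mnorm M y ≤ δ * n2 y} := by
  haveI := hμ.1
  set A := {R : Matrix (Fin d) (Fin d) ℝ | mnorm M (R.mulVec u) ≤ δ} with hA
  set p := μ A with hp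
  set C := {y : Fin d → ℝ | y ≠ 0 ∧ n2 y ≤ 1 ∧ mnorm M y ≤ δ * n2 y} with hC
  set D := {y : Fin d → ℝ | y ≠ 0 ∧ n2 y ≤ 1} with hD
  have hCmeas : MeasurableSet C := measC M δ
  have hDmeas : MeasurableSet D := measD
  set g : (Fin d → ℝ) → ENNReal := C.indicator 1 with hg
  have hgmeas : Measurable g := measurable_one.indicator hCmeas
  have huncur : Measurable (Function.uncurry fun (R : Matrix (Fin d) (Fin d) ℝ) (y : Fin d → ℝ) =>
      g (R.mulVec y)) := hgmeas.comp meas_mulVec_pair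
  have h_right : ∫⁻ R, ∫⁻ y, g (R.mulVec y) ∂volume ∂μ = volume C := by
    have hae : ∀ᵐ R ∂μ, (∫⁻ y, g (R.mulVec y) ∂volume) = volume C := by
      filter_upwards [aeG hμ] with R hR
      have hdet1 : |R.det| = 1 := by
        have h1 := orth_transpose_mul hR
        have h2 : R.det * R.det = 1 := by
          have := congrArg Matrix.det h1
          rwa [Matrix.det_mul, Matrix.det_transpose, Matrix.det_one] at this
        rcases mul_self_eq_one_iff.1 h2 with h | h <;> rw [h] <;> norm_num
      have hdetne : R.det ≠ 0 := by
        intro h; rw [h] at hdet1; norm_num at hdet1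
      have hmap : Measure.map (Matrix.toLin' R) volume = volume := by
        rw [Real.map_matrix_volume_pi_eq_smul_volume_pi hdetne, abs_inv, hdet1]
        simp
      have hre : ∀ y : Fin d → ℝ, R.mulVec y = Matrix.toLin' R y := fun y => (Matrix.toLin'_apply R y).symm
      simp_rw [hre]
      rw [← lintegral_map hgmeas (meas_mulVec_toLin' R), hmap, hg, lintegral_indicator hCmeas]
      simp
    rw [lintegral_congr_ae hae, lintegral_const, measure_univ, mul_one]
  have h_left : ∫⁻ R, ∫⁻ y, g (R.mulVec y) ∂volume ∂μ = p * volume D := by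
    rw [lintegral_lintegral_swap huncur.aemeasurable]
    have hpt : ∀ y : Fin d → ℝ, (∫⁻ R, g (R.mulVec y) ∂μ) = D.indicator (fun _ => p) y := by
      intro y
      by_cases hyD : y ∈ D
      · obtain ⟨hy0, hy1⟩ := hyD
        have hr : 0 < n2 y := n2_pos hy0
        set w := (n2 y)⁻¹ • y with hw
        have hwn : n2 w = 1 := by
          rw [hw, n2_smul, abs_of_pos (inv_pos.2 hr), inv_mul_cancel₀ hr.ne']
        have hgi : ∀ R : Matrix (Fin d) (Fin d) ℝ,
            g (R.mulVec y) = Set.indicator ((fun R : Matrix (Fin d) (Fin d) ℝ => R.mulVec y) ⁻¹' C) 1 R := by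
          intro R
          by_cases h : R.mulVec y ∈ C <;> simp [hg, Set.indicator_apply, Set.mem_preimage, h]
        simp_rw [hgi]
        rw [lintegral_indicator (meas_mulVec y hCmeas)]
        simp only [Pi.one_apply, lintegral_const, one_mul, Measure.restrict_apply MeasurableSet.univ,
          Set.univ_inter]
        have haeeq : ((fun R : Matrix (Fin d) (Fin d) ℝ => R.mulVec y) ⁻¹' C : Set _)
            =ᵐ[μ] {R : Matrix (Fin d) (Fin d) ℝ | mnorm M (R.mulVec w) ≤ δ} := by
          rw [Filter.eventuallyEq_set]
          filter_upwards [aeG hμ] with R hR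
          simp only [Set.mem_preimage, Set.mem_setOf_eq, hC]
          have hn2R : n2 (R.mulVec y) = n2 y := n2_mulVec_orth hR y
          have hRw : R.mulVec w = (n2 y)⁻¹ • R.mulVec y := by
            rw [hw, Matrix.mulVec_smul]
          have hmn : mnorm M (R.mulVec w) = (n2 y)⁻¹ * mnorm M (R.mulVec y) := by
            rw [hRw, mnorm_smul, abs_of_pos (inv_pos.2 hr)]
          constructor
          · rintro ⟨-, -, h3⟩
            rw [hmn]
            rw [hn2R] at h3
            calc (n2 y)⁻¹ * mnorm M (R.mulVec y) ≤ (n2 y)⁻¹ * (δ * n2 y) :=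
                  mul_le_mul_of_nonneg_left h3 (inv_nonneg.2 hr.le)
              _ = δ := by field_simp
          · intro h
            refine ⟨?_, ?_, ?_⟩
            · intro hz
              rw [← n2_eq_zero_iff] at hz
              rw [hn2R] at hz
              exact hr.ne' hz
            · rw [hn2R]; exact hy1
            · rw [hmn] at h
              rw [hn2R]
              calc mnorm M (R.mulVec y) = n2 y * ((n2 y)⁻¹ * mnorm M (R.mulVec y)) := by
                    field_simp
                _ ≤ n2 y * δ := by
                    exact mul_le_mul_of_nonneg_left h hr.le
                _ = δ * n2 y := mul_comm _ _
        rw [measure_congr haeeq, m_const hμ hd hu hwn M δ, Set.indicator_of_mem (show y ∈ D from ⟨hy0, hy1⟩)]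
      · rw [Set.indicator_of_notMem hyD]
        by_cases hy0 : y = 0
        · have : ∀ R : Matrix (Fin d) (Fin d) ℝ, g (R.mulVec y) = 0 := by
            intro R
            rw [hy0, Matrix.mulVec_zero, hg, Set.indicator_of_notMem]
            intro hmem
            exact hmem.1 rfl
          simp_rw [this]
          simp
        · have hy1 : ¬ n2 y ≤ 1 := by
            intro h; exact hyD ⟨hy0, h⟩
          have : ∀ᵐ R ∂μ, g (R.mulVec y) = 0 := by
            filter_upwards [aeG hμ] with R hR
            rw [hg, Set.indicator_of_notMem]
            intro hmem
            exact hy1 (by rw [← n2_mulVec_orth hR y]; exact hmem.2.1)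
          rw [lintegral_congr_ae this]
          simp
    rw [lintegral_congr hpt, lintegral_indicator hDmeas, setLIntegral_const]
  rw [← h_left, h_right]

lemma vol_ball_pi (hd : 1 ≤ d) :
    volume {y : Fin d → ℝ | n2 y < 1} = volume (Metric.ball (0 : EuclideanSpace ℝ (Fin d)) 1) := by
  have hmp := EuclideanSpace.volume_preserving_symm_measurableEquiv_toLp (Fin d)
  have hmeas : MeasurableSet {y : Fin d → ℝ | n2 y < 1} :=
    measurableSet_lt cont_n2.measurable measurable_const
  rw [← hmp.measure_preimage hmeas.nullMeasurableSet]
  congr 1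
  ext x
  have hx : n2 ((MeasurableEquiv.toLp 2 (Fin d → ℝ)).symm x) = ‖x‖ := by
    have h1 : toE ((MeasurableEquiv.toLp 2 (Fin d → ℝ)).symm x) = x := rfl
    rw [← norm_toE, h1]
  simp only [Set.mem_preimage, Set.mem_setOf_eq, Metric.mem_ball, dist_zero_right, hx]

lemma vol_singleton0 (hd : 1 ≤ d) : volume ({0} : Set (Fin d → ℝ)) = 0 := by
  have h : ({0} : Set (Fin d → ℝ)) = Set.pi Set.univ (fun _ => ({0} : Set ℝ)) := by
    ext z
    simp [Set.mem_pi, funext_iff]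
  rw [h, volume_pi_pi]
  simp only [Real.volume_singleton]
  rw [Finset.prod_const]
  rw [Finset.card_univ, Fintype.card_fin]
  exact zero_pow (by omega)

end Main

end Stmt11Aux

theorem stmt11 {d : ℕ} (hd : 1 ≤ d) (M : Matrix (Fin d) (Fin d) ℝ)
    (hMs : M.IsSymm) (hM : M.PosDef) (hdet : M.det = 1)
    (δ : ℝ) (hδ : 0 < δ) (u : Fin d → ℝ) (hu : Real.sqrt (∑ i, u i ^ 2) = 1)
    (μ : MeasureTheory.Measure (Matrix (Fin d) (Fin d) ℝ)) (hμ : isHaarOnO d μ) :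
    μ { R | mnorm M (R.mulVec u) ≤ δ }
      ≤ ENNReal.ofReal
          (2 ^ d / unitBallVol d * δ ^ (d - 1) * (Real.sqrt (opn M⁻¹))⁻¹) := by
  classical
  open Stmt11Aux in
  have hun2 : Stmt11Aux.n2 u = 1 := hu
  obtain ⟨i₀, -, hmin'⟩ := Finset.exists_min_image Finset.univ hM.1.eigenvalues
    ⟨⟨0, hd⟩, Finset.mem_univ _⟩
  have hmin : ∀ i, hM.1.eigenvalues i₀ ≤ hM.1.eigenvalues i := fun i => hmin' i (Finset.mem_univ i)
  set ν₀ := Real.sqrt (hM.1.eigenvalues i₀) with hν₀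
  set s := (Real.sqrt (opn M⁻¹))⁻¹ with hs
  have hν₀pos : 0 < ν₀ := Real.sqrt_pos.2 (hM.eigenvalues_pos i₀)
  have hop_le : opn M⁻¹ ≤ (hM.1.eigenvalues i₀)⁻¹ := Stmt11Aux.opn_inv_le hM hmin
  have hop_ge : (hM.1.eigenvalues i₀)⁻¹ ≤ opn M⁻¹ := Stmt11Aux.opn_inv_pos hM
  have hop_pos : 0 < opn M⁻¹ := lt_of_lt_of_le (inv_pos.2 (hM.eigenvalues_pos i₀)) hop_ge
  have h3 : Real.sqrt (opn M⁻¹) ≤ ν₀⁻¹ := by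
    rw [hν₀, ← Real.sqrt_inv]
    exact Real.sqrt_le_sqrt hop_le
  have h4 : 0 < Real.sqrt (opn M⁻¹) := Real.sqrt_pos.2 hop_pos
  have hν₀s : ν₀ ≤ s := by
    rw [hs, ← inv_inv ν₀]
    exact inv_anti₀ h4 h3
  have hspos : 0 < s := lt_of_lt_of_le hν₀pos hν₀s
  set ω : ENNReal := volume (Metric.ball (0 : EuclideanSpace ℝ (Fin d)) 1) with hω
  have hω0 : ω ≠ 0 := (Metric.measure_ball_pos volume _ one_pos).ne'
  have hωtop : ω ≠ ⊤ := (MeasureTheory.measure_ball_lt_top).ne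
  have hubv : ENNReal.ofReal (unitBallVol d) = ω := ENNReal.ofReal_toReal hωtop
  have hubvpos : 0 < unitBallVol d := ENNReal.toReal_pos hω0 hωtop
  have hkey := Stmt11Aux.key_identity hd hM hδ hun2 hμ
  have hDge : ω ≤ volume {y : Fin d → ℝ | y ≠ 0 ∧ Stmt11Aux.n2 y ≤ 1} := by
    calc ω = volume {y : Fin d → ℝ | Stmt11Aux.n2 y < 1} := (Stmt11Aux.vol_ball_pi hd).symm
      _ = volume ({y : Fin d → ℝ | Stmt11Aux.n2 y < 1} \ {0}) :=
          (measure_diff_null (Stmt11Aux.vol_singleton0 hd)).symm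
      _ ≤ volume {y : Fin d → ℝ | y ≠ 0 ∧ Stmt11Aux.n2 y ≤ 1} := by
          apply measure_mono
          rintro y ⟨h1, h2⟩
          exact ⟨h2, le_of_lt h1⟩
  have hCC' : volume {y : Fin d → ℝ | y ≠ 0 ∧ Stmt11Aux.n2 y ≤ 1 ∧ mnorm M y ≤ δ * Stmt11Aux.n2 y}
      ≤ volume {y : Fin d → ℝ | Stmt11Aux.n2 y ≤ 1 ∧ mnorm M y ≤ δ} := by
    apply measure_mono
    rintro y ⟨h0, h1, h2⟩
    refine ⟨h1, le_trans h2 ?_⟩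
    calc δ * Stmt11Aux.n2 y ≤ δ * 1 := mul_le_mul_of_nonneg_left h1 hδ.le
      _ = δ := mul_one δ
  have hbound := Stmt11Aux.volC'_le hM hdet hd hδ hmin
  have hchain : μ { R | mnorm M (R.mulVec u) ≤ δ } * ω
      ≤ ENNReal.ofReal (2 ^ d * (δ ^ (d - 1) * s)) := by
    calc μ { R | mnorm M (R.mulVec u) ≤ δ } * ω
        ≤ μ { R | mnorm M (R.mulVec u) ≤ δ } * volume {y : Fin d → ℝ | y ≠ 0 ∧ Stmt11Aux.n2 y ≤ 1} :=
          mul_le_mul_right hDge _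
      _ = volume {y : Fin d → ℝ | y ≠ 0 ∧ Stmt11Aux.n2 y ≤ 1 ∧ mnorm M y ≤ δ * Stmt11Aux.n2 y} := hkey
      _ ≤ volume {y : Fin d → ℝ | Stmt11Aux.n2 y ≤ 1 ∧ mnorm M y ≤ δ} := hCC'
      _ ≤ ENNReal.ofReal (2 ^ d * (δ ^ (d - 1) * ν₀)) := hbound
      _ ≤ ENNReal.ofReal (2 ^ d * (δ ^ (d - 1) * s)) := by
          apply ENNReal.ofReal_le_ofReal
          apply mul_le_mul_of_nonneg_left _ (by positivity)
          exact mul_le_mul_of_nonneg_left hν₀s (by positivity)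
  have hfinal : μ { R | mnorm M (R.mulVec u) ≤ δ }
      ≤ ENNReal.ofReal (2 ^ d * (δ ^ (d - 1) * s)) / ω :=
    (ENNReal.le_div_iff_mul_le (Or.inl hω0) (Or.inl hωtop)).2 hchain
  have hdiv : ENNReal.ofReal (2 ^ d * (δ ^ (d - 1) * s)) / ω
      = ENNReal.ofReal (2 ^ d / unitBallVol d * δ ^ (d - 1) * s) := by
    rw [← hubv, ← ENNReal.ofReal_div_of_pos hubvpos]
    congr 1
    field_simp
  rw [hdiv] at hfinal
  exact hfinal
end
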